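/- If k is algebraically closed, then S_λ = k^* for every λ ∈ R − k; that is, for every c ∈ k^* there exists σ ∈ Aut_k(R) with σ(λ) = cλ. -/

import Mathlib

/-!
Scalar multiplication by `kˣ` commutes with `Aut_k(R)`, so `kˣ` permutes the `Aut_k(R)`-orbits
in `R`, and `S_λ` is the stabilizer of the orbit of `λ`. All scalar multiples of `λ` lie outside
`k`, so their orbits are among the finitely many orbits of the representatives; by
orbit–stabilizer `S_λ` has finite index `n`. In an algebraically closed field every `c ≠ 0` is an
`n`-th power `z ^ n`, and `z ^ n ∈ S_λ`.
-/

open MulAction Pointwise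

section CommutingActions

variable {G H X : Type*} [Group G] [Group H] [MulAction G X] [MulAction H X]
  [SMulCommClass G H X]

theorem MulAction.smul_orbit_of_smulCommClass (h : H) (x : X) :
    h • orbit G x = orbit G (h • x) := by
  simp only [orbit, Set.smul_set_range, smul_comm]

theorem MulAction.mem_stabilizer_orbit_iff {h : H} {x : X} :
    h ∈ stabilizer H (orbit G x) ↔ h • x ∈ orbit G x := by
  rw [mem_stabilizer_iff, smul_orbit_of_smulCommClass, orbit_eq_iff]

theorem MulAction.finiteIndex_stabilizer_orbit {x : X} {s : Set X} (hs : s.Finite)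
    (hx : ∀ h : H, ∃ y ∈ s, h • x ∈ orbit G y) :
    (stabilizer H (orbit G x)).FiniteIndex := by
  have hsub : orbit H (orbit G x) ⊆ (orbit G ·) '' s := by
    rintro _ ⟨h, rfl⟩
    obtain ⟨y, hy, hxy⟩ := hx h
    exact ⟨y, hy, by simp only [smul_orbit_of_smulCommClass, orbit_eq_iff.2 hxy]⟩
  refine ⟨?_⟩
  rw [index_stabilizer]
  exact ((Set.ncard_pos ((hs.image _).subset hsub)).2 (nonempty_orbit _)).ne'

end CommutingActions

theorem Subgroup.eq_top_of_finiteIndex_of_isAlgClosed {k : Type*} [Field k] [IsAlgClosed k]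
    (S : Subgroup kˣ) [S.FiniteIndex] : S = ⊤ := by
  have hn : S.index ≠ 0 := FiniteIndex.index_ne_zero
  refine eq_top_iff.2 fun c _ => ?_
  obtain ⟨z, hz⟩ := IsAlgClosed.exists_pow_nat_eq (c : k) (Nat.pos_of_ne_zero hn)
  have hz0 : z ≠ 0 := by
    rintro rfl
    exact c.ne_zero (by rw [← hz, zero_pow hn])
  convert S.pow_index_mem (Units.mk0 z hz0)
  ext
  simp [hz]

theorem units_smul_mem_range_algebraMap_iff {k R : Type*} [CommSemiring k] [Semiring R]
    [Algebra k R] {a : kˣ} {x : R} :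
    a • x ∈ Set.range (algebraMap k R) ↔ x ∈ Set.range (algebraMap k R) := by
  simpa only [← Algebra.mem_bot, Subalgebra.mem_toSubmodule] using
    Submodule.smul_mem_iff' (p := Subalgebra.toSubmodule (⊥ : Subalgebra k R)) a

theorem scaling_full_of_algebraically_closed_general
    (k R : Type*) [Field k] [IsAlgClosed k] [CommRing R]
    [Algebra k R]
    (horb : ∃ s : Finset R, ∀ x : R, x ∉ Set.range (algebraMap k R) →
      ∃ y ∈ s, ∃ σ : R ≃ₐ[k] R, σ y = x) :
    ∀ lam : R, lam ∉ Set.range (algebraMap k R) → ∀ c : k, c ≠ 0 →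
      ∃ σ : R ≃ₐ[k] R, σ lam = algebraMap k R c * lam := by
  obtain ⟨s, hs⟩ := horb
  intro lam hlam c hc
  have : (stabilizer kˣ (orbit (R ≃ₐ[k] R) lam)).FiniteIndex :=
    finiteIndex_stabilizer_orbit s.finite_toSet fun a =>
      hs _ (units_smul_mem_range_algebraMap_iff.not.2 hlam)
  have hstab := (stabilizer kˣ (orbit (R ≃ₐ[k] R) lam)).eq_top_of_finiteIndex_of_isAlgClosed
  obtain ⟨σ, hσ⟩ := mem_stabilizer_orbit_iff.1 ((Subgroup.eq_top_iff' _).1 hstab (Units.mk0 c hc))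
  exact ⟨σ, by simpa [Units.smul_def, Algebra.smul_def] using hσ⟩

theorem scaling_full_of_algebraically_closed
    (k R : Type*) [Field k] [IsAlgClosed k] [CommRing R] [IsDomain R]
    [IsNoetherianRing R] [Infinite R] [Algebra k R]
    (hinj : Function.Injective (algebraMap k R))
    (horb : ∃ s : Finset R, ∀ x : R, x ∉ Set.range (algebraMap k R) →
      ∃ y ∈ s, ∃ σ : R ≃ₐ[k] R, σ y = x) :
    ∀ lam : R, lam ∉ Set.range (algebraMap k R) → ∀ c : k, c ≠ 0 →
      ∃ σ : R ≃ₐ[k] R, σ lam = algebraMap k R c * lam :=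
  scaling_full_of_algebraically_closed_general k R horb
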